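/- There is an absolute constant C such that for all Schwartz functions f, g on ℝ and all λ > 0, |{ x ∈ ℝ : M_Lac(f,g)(x) > λ }| ≤ C · λ^{-1} · ‖f‖_{L²(ℝ)} ‖g‖_{L²(ℝ)}. In other words, the bilinear lacunary maximal operator M_Lac maps L²(ℝ) × L²(ℝ) to L^{1,∞}(ℝ). -/

import Mathlib

open MeasureTheory Set Real
open scoped ENNReal NNReal

/-- The closed rectangle in `ℝ²` with given center, whose sides of length `a`
point in direction `(cos θ, sin θ)` and whose sides of length `b` point in the
orthogonal direction `(-sin θ, cos θ)`. -/
def rect (center : ℝ × ℝ) (θ a b : ℝ) : Set (ℝ × ℝ) :=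
  {p | ∃ s t : ℝ, |s| ≤ a / 2 ∧ |t| ≤ b / 2 ∧
    p = (center.1 + s * Real.cos θ - t * Real.sin θ,
         center.2 + s * Real.sin θ + t * Real.cos θ)}

/-- Average of a nonnegative function over a set in `ℝ²`. -/
noncomputable def avgOn (R : Set (ℝ × ℝ)) (F : ℝ × ℝ → ℝ≥0∞) : ℝ≥0∞ :=
  (∫⁻ p in R, F p) / volume R

/-- The bilinear lacunary maximal operator: the supremum, over all rectangles
(of side lengths `a × b`, `a ≥ b > 0`) centered at `(x, x)` whose longest side
makes an angle `2^{-j}` (for some `j : ℕ`) with the diagonal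
`D = {(t, t) : t ∈ ℝ}` (whose direction has angle `π/4`), of the average of
`|f(y) g(z)|` over the rectangle. -/
noncomputable def lacMax (f g : ℝ → ℂ) (x : ℝ) : ℝ≥0∞ :=
  ⨆ (j : ℕ) (θ : ℝ)
    (_ : θ = π / 4 + (2 : ℝ) ^ (-(j : ℝ)) ∨ θ = π / 4 - (2 : ℝ) ^ (-(j : ℝ)))
    (a : ℝ) (b : ℝ) (_ : 0 < b) (_ : b ≤ a),
    avgOn (rect (x, x) θ a b) (fun p => (‖f p.1 * g p.2‖₊ : ℝ≥0∞))

/-!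
Since `2^{-j} ≤ 1`, the long side of a rectangle in `𝓑_x` stays away from both coordinate axes:
`|cos θ sin θ| = |sin 2θ| / 2 = |cos 2^{1-j}| / 2 ≥ 1/18`. Hence every line parallel to an axis
meets a rectangle with sides `a ≥ b` in a segment of length `≤ 18 b`, and the rectangle projects
into `[x - a, x + a]` on both axes. Bounding `|f(y) g(z)| ≤ t |f(y)|² + t⁻¹ |g(z)|²` and integrating
along these slices, the average over the rectangle is at most
`18 a⁻¹ ∫_{x-a}^{x+a} (t |f|² + t⁻¹ |g|²)`, so `M_Lac(f, g)` is dominated by the Hardy–Littlewood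
maximal function of `t |f|² + t⁻¹ |g|²`. Its weak `(1,1)` bound (Vitali covering) and the choice
`t = ‖g‖₂ / ‖f‖₂` give the claim.
-/

open Metric

lemma ENNReal.mul_le_mul_sq_add_inv_mul_sq {t : ℝ≥0∞} (ht₀ : t ≠ 0) (ht : t ≠ ∞) (x y : ℝ≥0∞) :
    x * y ≤ t * x ^ 2 + t⁻¹ * y ^ 2 := by
  rcases le_total (t * x) y with h | h
  · calc x * y = t⁻¹ * (t * x) * y := by rw [← mul_assoc, ENNReal.inv_mul_cancel ht₀ ht, one_mul]
      _ ≤ t⁻¹ * y * y := by gcongr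
      _ ≤ _ := by rw [mul_assoc, ← sq]; exact le_add_self
  · calc x * y ≤ x * (t * x) := by gcongr
      _ ≤ _ := by rw [mul_left_comm, ← sq]; exact le_self_add

lemma ENNReal.div_mul_sq_add_inv_div_mul_sq {a b : ℝ≥0∞} (ha₀ : a ≠ 0) (ha : a ≠ ∞)
    (hb₀ : b ≠ 0) (hb : b ≠ ∞) : b / a * a ^ 2 + (b / a)⁻¹ * b ^ 2 = 2 * (a * b) := by
  rw [ENNReal.inv_div (Or.inr hb) (Or.inr hb₀), sq, sq, ← mul_assoc, ← mul_assoc,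
    ENNReal.div_mul_cancel ha₀ ha, ENNReal.div_mul_cancel hb₀ hb, two_mul, mul_comm b]

lemma eLpNorm_two_sq {α E : Type*} [MeasurableSpace α] {μ : Measure α} [ENorm E] (f : α → E) :
    eLpNorm f 2 μ ^ 2 = ∫⁻ x, ‖f x‖ₑ ^ 2 ∂μ := by
  simpa using eLpNorm_nnreal_pow_eq_lintegral (f := f) (μ := μ) (p := 2) two_ne_zero

lemma Real.volume_setOf_abs_mul_add_le {c : ℝ} (hc : c ≠ 0) (d r : ℝ) :
    volume {z : ℝ | |c * z + d| ≤ r} = ENNReal.ofReal (2 * r / |c|) := by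
  have : {z : ℝ | |c * z + d| ≤ r} = (c * ·) ⁻¹' closedBall (-d) r := by
    ext z
    simp [Real.dist_eq]
  rw [this, Real.volume_preimage_mul_left hc, Real.volume_closedBall,
    ← ENNReal.ofReal_mul (abs_nonneg _), abs_inv, inv_mul_eq_div]

section SliceBound

variable {α β : Type*} [MeasurableSpace α] [MeasurableSpace β] {μ : Measure α} {ν : Measure β}
  {W : Set (α × β)} {κ : ℝ≥0∞}

lemma setLIntegral_comp_fst_le [SFinite ν] (hW : MeasurableSet W) {s : Set α} (hs : MeasurableSet s)
    (hWs : ∀ p ∈ W, p.1 ∈ s) (hslice : ∀ y, ν (Prod.mk y ⁻¹' W) ≤ κ) {H : α → ℝ≥0∞}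
    (hH : AEMeasurable H μ) :
    ∫⁻ p in W, H p.1 ∂μ.prod ν ≤ κ * ∫⁻ y in s, H y ∂μ := by
  have hslice_s : ∀ y, ν (Prod.mk y ⁻¹' W) ≤ s.indicator (fun _ => κ) y := by
    intro y
    by_cases hy : y ∈ s
    · simpa [hy] using hslice y
    · have : Prod.mk y ⁻¹' W = ∅ := eq_empty_of_forall_notMem fun z hz => hy (hWs _ hz)
      simp [this]
  calc ∫⁻ p in W, H p.1 ∂μ.prod ν = (μ.withDensity H).prod ν W := by
        rw [prod_withDensity_left₀ hH, withDensity_apply _ hW]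
    _ = ∫⁻ y, ν (Prod.mk y ⁻¹' W) ∂μ.withDensity H := Measure.prod_apply hW
    _ ≤ ∫⁻ y, s.indicator (fun _ => κ) y ∂μ.withDensity H := lintegral_mono hslice_s
    _ = κ * ∫⁻ y in s, H y ∂μ := by
        rw [lintegral_indicator_const hs, withDensity_apply _ hs]

lemma setLIntegral_comp_snd_le [SFinite μ] [SFinite ν] (hW : MeasurableSet W) {s : Set β}
    (hs : MeasurableSet s) (hWs : ∀ p ∈ W, p.2 ∈ s) (hslice : ∀ z, μ ((·, z) ⁻¹' W) ≤ κ)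
    {H : β → ℝ≥0∞} (hH : AEMeasurable H ν) :
    ∫⁻ p in W, H p.2 ∂μ.prod ν ≤ κ * ∫⁻ z in s, H z ∂ν := by
  rw [← (Measure.measurePreserving_swap (μ := ν) (ν := μ)).setLIntegral_comp_preimage_emb
    MeasurableEquiv.prodComm.measurableEmbedding]
  exact setLIntegral_comp_fst_le (measurable_swap hW) hs (fun p hp => hWs _ hp) hslice hH

end SliceBound

theorem volume_setOf_exists_lt_measure_closedBall_le (ν : Measure ℝ) {c : ℝ} (hc : 0 < c) :
    volume {x | ∃ r, 0 < r ∧ ENNReal.ofReal (c * r) < ν (closedBall x r)} ≤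
      ENNReal.ofReal (8 / c) * ν univ := by
  set E := {x | ∃ r, 0 < r ∧ ENNReal.ofReal (c * r) < ν (closedBall x r)}
  rcases eq_or_ne (ν univ) ∞ with hν | hν
  · simp [hν, ENNReal.mul_top, hc]
  have hex : ∀ x ∈ E, ∃ r, 0 < r ∧ r ≤ (ν univ).toReal / c ∧
      ENNReal.ofReal (c * r) < ν (closedBall x r) := by
    rintro x ⟨r, hr, hlt⟩
    refine ⟨r, hr, ?_, hlt⟩
    rw [le_div_iff₀ hc, mul_comm, ← ENNReal.ofReal_le_iff_le_toReal hν]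
    exact hlt.le.trans (measure_mono (subset_univ _))
  choose! r hr₀ hrR hr using hex
  obtain ⟨u, huE, hdisj, hcover⟩ :=
    Vitali.exists_disjoint_subfamily_covering_enlargement_closedBall E id r _ hrR 4 (by norm_num)
  simp only [id_eq] at hdisj hcover
  have hu : u.Countable := hdisj.countable_of_nonempty_interior fun x hx => by
    simpa [interior_closedBall x (hr₀ x (huE hx)).ne'] using hr₀ x (huE hx)
  calc volume E ≤ volume (⋃ x ∈ u, closedBall x (4 * r x)) := by
        refine measure_mono fun x hx => ?_
        obtain ⟨y, hyu, hsub⟩ := hcover x hx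
        exact mem_biUnion hyu (hsub (mem_closedBall_self (hr₀ x hx).le))
    _ ≤ ∑' x : u, volume (closedBall (x : ℝ) (4 * r x)) := measure_biUnion_le _ hu _
    _ ≤ ∑' x : u, ENNReal.ofReal (8 / c) * ν (closedBall (x : ℝ) (r x)) := by
        refine ENNReal.tsum_le_tsum fun x => ?_
        rw [Real.volume_closedBall, show 2 * (4 * r x) = 8 / c * (c * r x) by field_simp; ring,
          ENNReal.ofReal_mul (by positivity)]
        gcongr
        exact (hr x (huE x.2)).le
    _ = ENNReal.ofReal (8 / c) * ν (⋃ x ∈ u, closedBall x (r x)) := by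
        rw [ENNReal.tsum_mul_left, measure_biUnion hu hdisj fun _ _ => measurableSet_closedBall]
    _ ≤ ENNReal.ofReal (8 / c) * ν univ := by gcongr; exact subset_univ _

lemma mem_rect_iff {c : ℝ × ℝ} {θ a b : ℝ} {p : ℝ × ℝ} :
    p ∈ rect c θ a b ↔
      |cos θ * (p.1 - c.1) + sin θ * (p.2 - c.2)| ≤ a / 2 ∧
      |-sin θ * (p.1 - c.1) + cos θ * (p.2 - c.2)| ≤ b / 2 := by
  have pyth := sin_sq_add_cos_sq θ
  constructor
  · rintro ⟨s, t, hs, ht, rfl⟩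
    constructor
    · convert hs using 2; linear_combination s * pyth
    · convert ht using 2; linear_combination t * pyth
  · rintro ⟨hs, ht⟩
    refine ⟨_, _, hs, ht, Prod.ext ?_ ?_⟩
    · linear_combination (c.1 - p.1) * pyth
    · linear_combination (c.2 - p.2) * pyth

lemma measurableSet_rect (c : ℝ × ℝ) (θ a b : ℝ) : MeasurableSet (rect c θ a b) := by
  have : rect c θ a b =
      {p | |cos θ * (p.1 - c.1) + sin θ * (p.2 - c.2)| ≤ a / 2} ∩
        {p | |-sin θ * (p.1 - c.1) + cos θ * (p.2 - c.2)| ≤ b / 2} :=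
    Set.ext fun _ => mem_rect_iff
  rw [this]
  exact (measurableSet_le (by fun_prop) measurable_const).inter
    (measurableSet_le (by fun_prop) measurable_const)

lemma volume_rect (c : ℝ × ℝ) (θ : ℝ) {a b : ℝ} (ha : 0 ≤ a) :
    volume (rect c θ a b) = ENNReal.ofReal (a * b) := by
  set L := Matrix.toLin (Module.Basis.finTwoProd ℝ) (Module.Basis.finTwoProd ℝ)
    !![cos θ, sin θ; -sin θ, cos θ]
  have hdet : LinearMap.det L = 1 := by
    rw [LinearMap.det_toLin, Matrix.det_fin_two_of]
    linear_combination sin_sq_add_cos_sq θ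
  have hrect : rect c θ a b =
      (· + -c) ⁻¹' (L ⁻¹' (Icc (-(a / 2)) (a / 2) ×ˢ Icc (-(b / 2)) (b / 2))) := by
    ext p
    simp only [mem_rect_iff, mem_preimage, mem_prod, mem_Icc, ← abs_le, L,
      Matrix.toLin_finTwoProd_apply, ← sub_eq_add_neg, Prod.fst_sub, Prod.snd_sub]
  rw [hrect, measure_preimage_add_right, Measure.addHaar_preimage_linearMap _ (by simp [hdet]),
    hdet, Measure.volume_eq_prod, Measure.prod_prod, Real.volume_Icc, Real.volume_Icc,
    ← ENNReal.ofReal_mul (by linarith)]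
  simp only [inv_one, abs_one, ENNReal.ofReal_one, one_mul]
  ring_nf

lemma rect_subset_closedBall (c : ℝ × ℝ) (θ a b : ℝ) :
    rect c θ a b ⊆ closedBall c ((a + b) / 2) := by
  rintro _ ⟨s, t, hs, ht, rfl⟩
  have hcos := abs_cos_le_one θ
  have hsin := abs_sin_le_one θ
  have hs' : |s| * |cos θ| ≤ |s| := mul_le_of_le_one_right (abs_nonneg s) hcos
  have hs'' : |s| * |sin θ| ≤ |s| := mul_le_of_le_one_right (abs_nonneg s) hsin
  have ht' : |t| * |cos θ| ≤ |t| := mul_le_of_le_one_right (abs_nonneg t) hcos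
  have ht'' : |t| * |sin θ| ≤ |t| := mul_le_of_le_one_right (abs_nonneg t) hsin
  rw [mem_closedBall, Prod.dist_eq, Real.dist_eq, Real.dist_eq]
  refine max_le ?_ ?_
  · calc _ = |s * cos θ - t * sin θ| := by ring_nf
      _ ≤ |s| * |cos θ| + |t| * |sin θ| := by rw [← abs_mul, ← abs_mul]; exact abs_sub _ _
      _ ≤ _ := by linarith
  · calc _ = |s * sin θ + t * cos θ| := by ring_nf
      _ ≤ |s| * |sin θ| + |t| * |cos θ| := by rw [← abs_mul, ← abs_mul]; exact abs_add_le _ _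
      _ ≤ _ := by linarith

lemma mem_closedBall_of_mem_rect {c p : ℝ × ℝ} {θ a b : ℝ} (hba : b ≤ a)
    (hp : p ∈ rect c θ a b) : p.1 ∈ closedBall c.1 a ∧ p.2 ∈ closedBall c.2 a := by
  have h := mem_closedBall.1 (rect_subset_closedBall c θ a b hp)
  rw [Prod.dist_eq, max_le_iff] at h
  exact ⟨mem_closedBall.2 (by linarith [h.1]), mem_closedBall.2 (by linarith [h.2])⟩

lemma volume_rect_vertical_slice_le (c : ℝ × ℝ) {θ : ℝ} (hθ : cos θ ≠ 0) (a b y : ℝ) :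
    volume (Prod.mk y ⁻¹' rect c θ a b) ≤ ENNReal.ofReal (b / |cos θ|) := by
  calc volume (Prod.mk y ⁻¹' rect c θ a b)
      ≤ volume {z | |cos θ * z + (-sin θ * (y - c.1) - cos θ * c.2)| ≤ b / 2} := by
        refine measure_mono fun z hz => ?_
        rw [mem_ofPred_eq]
        convert (mem_rect_iff.1 hz).2 using 2
        ring
    _ = ENNReal.ofReal (b / |cos θ|) := by
        rw [Real.volume_setOf_abs_mul_add_le hθ]; ring_nf

lemma volume_rect_horizontal_slice_le (c : ℝ × ℝ) {θ : ℝ} (hθ : sin θ ≠ 0) (a b z : ℝ) :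
    volume ((·, z) ⁻¹' rect c θ a b) ≤ ENNReal.ofReal (b / |sin θ|) := by
  calc volume ((·, z) ⁻¹' rect c θ a b)
      ≤ volume {y | |-sin θ * y + (sin θ * c.1 + cos θ * (z - c.2))| ≤ b / 2} := by
        refine measure_mono fun y hy => ?_
        rw [mem_ofPred_eq]
        convert (mem_rect_iff.1 hy).2 using 2
        ring
    _ = ENNReal.ofReal (b / |sin θ|) := by
        rw [Real.volume_setOf_abs_mul_add_le (neg_ne_zero.2 hθ), abs_neg]; ring_nf

lemma lintegral_rect_le {f g : ℝ → ℂ} (hf : AEMeasurable f) (hg : AEMeasurable g) {t : ℝ≥0∞}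
    (ht₀ : t ≠ 0) (ht : t ≠ ∞) (c : ℝ × ℝ) {θ a b : ℝ} (hba : b ≤ a) (hcos : cos θ ≠ 0)
    (hsin : sin θ ≠ 0) :
    ∫⁻ p in rect c θ a b, ‖f p.1 * g p.2‖ₑ ≤
      ENNReal.ofReal (b / |cos θ|) * (∫⁻ y in closedBall c.1 a, t * ‖f y‖ₑ ^ 2) +
        ENNReal.ofReal (b / |sin θ|) * ∫⁻ z in closedBall c.2 a, t⁻¹ * ‖g z‖ₑ ^ 2 := by
  have hR := measurableSet_rect c θ a b
  have hF : AEMeasurable (fun y => t * ‖f y‖ₑ ^ 2) := (hf.enorm.pow_const 2).const_mul t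
  have hG : AEMeasurable (fun z => t⁻¹ * ‖g z‖ₑ ^ 2) := (hg.enorm.pow_const 2).const_mul t⁻¹
  rw [Measure.volume_eq_prod]
  calc ∫⁻ p in rect c θ a b, ‖f p.1 * g p.2‖ₑ ∂volume.prod volume
      ≤ ∫⁻ p in rect c θ a b, (t * ‖f p.1‖ₑ ^ 2 + t⁻¹ * ‖g p.2‖ₑ ^ 2) ∂volume.prod volume := by
        refine lintegral_mono fun p => ?_
        rw [enorm_mul]
        exact ENNReal.mul_le_mul_sq_add_inv_mul_sq ht₀ ht _ _
    _ = ∫⁻ p in rect c θ a b, t * ‖f p.1‖ₑ ^ 2 ∂volume.prod volume +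
          ∫⁻ p in rect c θ a b, t⁻¹ * ‖g p.2‖ₑ ^ 2 ∂volume.prod volume :=
        lintegral_add_left'
          (hF.comp_quasiMeasurePreserving Measure.quasiMeasurePreserving_fst).restrict _
    _ ≤ _ := add_le_add
        (setLIntegral_comp_fst_le hR measurableSet_closedBall
          (fun p hp => (mem_closedBall_of_mem_rect hba hp).1)
          (volume_rect_vertical_slice_le c hcos a b) hF)
        (setLIntegral_comp_snd_le hR measurableSet_closedBall
          (fun p hp => (mem_closedBall_of_mem_rect hba hp).2)
          (volume_rect_horizontal_slice_le c hsin a b) hG)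

lemma one_div_nine_le_abs_cos_two_mul_two_rpow_neg (j : ℕ) :
    1 / 9 ≤ |cos (2 * (2 : ℝ) ^ (-(j : ℝ)))| := by
  rcases Nat.eq_zero_or_pos j with rfl | hj
  · have h1 : 1 / 2 ≤ cos 1 := by linarith [one_sub_sq_div_two_le_cos (x := 1)]
    have h2 : cos 2 = 2 * cos 1 ^ 2 - 1 := by rw [← cos_two_mul, mul_one]
    rw [abs_of_neg] <;> norm_num <;> nlinarith [cos_one_le]
  · have hx : 2 * (2 : ℝ) ^ (-(j : ℝ)) ≤ 1 := by
      calc 2 * (2 : ℝ) ^ (-(j : ℝ)) ≤ 2 * (2 : ℝ) ^ (-1 : ℝ) := by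
            gcongr
            · norm_num
            · exact_mod_cast hj
        _ = 1 := by norm_num
    have hx₀ : 0 ≤ 2 * (2 : ℝ) ^ (-(j : ℝ)) := by positivity
    have := one_sub_sq_div_two_le_cos (x := 2 * (2 : ℝ) ^ (-(j : ℝ)))
    rw [abs_of_pos] <;> nlinarith

lemma one_div_eighteen_le_abs_cos_mul_sin (j : ℕ) {θ : ℝ}
    (hθ : θ = π / 4 + (2 : ℝ) ^ (-(j : ℝ)) ∨ θ = π / 4 - (2 : ℝ) ^ (-(j : ℝ))) :
    1 / 18 ≤ |cos θ * sin θ| := by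
  have h : |sin (2 * θ)| = |cos (2 * (2 : ℝ) ^ (-(j : ℝ)))| := by
    rcases hθ with rfl | rfl
    · rw [show 2 * (π / 4 + (2 : ℝ) ^ (-(j : ℝ))) = 2 * (2 : ℝ) ^ (-(j : ℝ)) + π / 2 by ring,
        sin_add_pi_div_two]
    · rw [show 2 * (π / 4 - (2 : ℝ) ^ (-(j : ℝ))) = π / 2 - 2 * (2 : ℝ) ^ (-(j : ℝ)) by ring,
        sin_pi_div_two_sub]
  have := one_div_nine_le_abs_cos_two_mul_two_rpow_neg j
  rw [← h, sin_two_mul, mul_assoc, abs_mul, abs_two, mul_comm (sin θ)] at this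
  linarith

lemma avgOn_rect_le {f g : ℝ → ℂ} (hf : AEMeasurable f) (hg : AEMeasurable g) {t : ℝ≥0∞}
    (ht₀ : t ≠ 0) (ht : t ≠ ∞) (x : ℝ) {θ a b κ : ℝ} (hκ : 0 < κ) (hθ : κ ≤ |cos θ * sin θ|)
    (hb : 0 < b) (hba : b ≤ a) :
    avgOn (rect (x, x) θ a b) (fun p => ‖f p.1 * g p.2‖ₑ) ≤
      ENNReal.ofReal (1 / (κ * a)) *
        ∫⁻ y in closedBall x a, (t * ‖f y‖ₑ ^ 2 + t⁻¹ * ‖g y‖ₑ ^ 2) := by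
  have hcos : κ ≤ |cos θ| :=
    hθ.trans (by rw [abs_mul]; exact mul_le_of_le_one_right (abs_nonneg _) (abs_sin_le_one θ))
  have hsin : κ ≤ |sin θ| :=
    hθ.trans (by rw [abs_mul]; exact mul_le_of_le_one_left (abs_nonneg _) (abs_cos_le_one θ))
  have ha : 0 < a := hb.trans_le hba
  have hF : AEMeasurable (fun y => t * ‖f y‖ₑ ^ 2) := (hf.enorm.pow_const 2).const_mul t
  have hnum : ∫⁻ p in rect (x, x) θ a b, ‖f p.1 * g p.2‖ₑ ≤
      ENNReal.ofReal (b / κ) *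
        ∫⁻ y in closedBall x a, (t * ‖f y‖ₑ ^ 2 + t⁻¹ * ‖g y‖ₑ ^ 2) := by
    rw [lintegral_add_left' hF.restrict, mul_add]
    refine (lintegral_rect_le hf hg ht₀ ht (x, x) hba (abs_pos.1 (hκ.trans_le hcos))
      (abs_pos.1 (hκ.trans_le hsin))).trans (add_le_add ?_ ?_) <;>
    gcongr
  calc avgOn (rect (x, x) θ a b) (fun p => ‖f p.1 * g p.2‖ₑ)
      ≤ ENNReal.ofReal (b / κ) *
          (∫⁻ y in closedBall x a, (t * ‖f y‖ₑ ^ 2 + t⁻¹ * ‖g y‖ₑ ^ 2)) /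
        ENNReal.ofReal (a * b) := by
        rw [avgOn, volume_rect _ _ ha.le]
        gcongr
    _ = _ := by
        rw [div_eq_mul_inv, mul_right_comm, ← ENNReal.ofReal_inv_of_pos (by positivity),
          ← ENNReal.ofReal_mul (by positivity)]
        congr 2
        field_simp

theorem volume_setOf_lt_lacMax_le {f g : ℝ → ℂ} (hf : AEMeasurable f) (hg : AEMeasurable g)
    {t : ℝ≥0∞} (ht₀ : t ≠ 0) (ht : t ≠ ∞) {lam : ℝ} (hlam : 0 < lam) :
    volume {x | ENNReal.ofReal lam < lacMax f g x} ≤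
      ENNReal.ofReal (144 / lam) *
        (t * eLpNorm f 2 volume ^ 2 + t⁻¹ * eLpNorm g 2 volume ^ 2) := by
  set φ : ℝ → ℝ≥0∞ := fun y => t * ‖f y‖ₑ ^ 2 + t⁻¹ * ‖g y‖ₑ ^ 2
  have hsub : {x | ENNReal.ofReal lam < lacMax f g x} ⊆
      {x | ∃ r, 0 < r ∧ ENNReal.ofReal (lam / 18 * r) <
        volume.withDensity φ (closedBall x r)} := by
    intro x hx
    simp only [mem_ofPred_eq, lacMax, lt_iSup_iff] at hx
    obtain ⟨j, θ, hθ, a, b, hb, hba, hx⟩ := hx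
    have ha : 0 < a := hb.trans_le hba
    have hlt := hx.trans_le (avgOn_rect_le hf hg ht₀ ht x (by norm_num)
      (one_div_eighteen_le_abs_cos_mul_sin j hθ) hb hba)
    refine ⟨a, ha, ?_⟩
    rw [withDensity_apply _ measurableSet_closedBall]
    calc ENNReal.ofReal (lam / 18 * a) = ENNReal.ofReal (a / 18) * ENNReal.ofReal lam := by
          rw [← ENNReal.ofReal_mul (by positivity)]; ring_nf
      _ < ENNReal.ofReal (a / 18) * (ENNReal.ofReal (1 / (1 / 18 * a)) *
            ∫⁻ y in closedBall x a, φ y) :=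
          ENNReal.mul_lt_mul_right (by simp [ha]) ENNReal.ofReal_ne_top hlt
      _ = ∫⁻ y in closedBall x a, φ y := by
          rw [← mul_assoc, ← ENNReal.ofReal_mul (by positivity)]
          field_simp
          simp
  calc volume {x | ENNReal.ofReal lam < lacMax f g x}
      ≤ ENNReal.ofReal (8 / (lam / 18)) * volume.withDensity φ univ :=
        (measure_mono hsub).trans
          (volume_setOf_exists_lt_measure_closedBall_le _ (by positivity))
    _ = _ := by
        rw [withDensity_apply _ MeasurableSet.univ, Measure.restrict_univ,
          lintegral_add_left' ((hf.enorm.pow_const 2).const_mul t),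
          lintegral_const_mul' _ _ ht, lintegral_const_mul' _ _ (ENNReal.inv_ne_top.2 ht₀),
          eLpNorm_two_sq, eLpNorm_two_sq]
        congr 2
        field_simp
        norm_num

lemma lacMax_eq_zero_of_eLpNorm_mul_eq_zero {f g : ℝ → ℂ} (hf : AEStronglyMeasurable f)
    (hg : AEStronglyMeasurable g) (h : eLpNorm f 2 volume * eLpNorm g 2 volume = 0) (x : ℝ) :
    lacMax f g x = 0 := by
  have hfg : (fun p : ℝ × ℝ => f p.1 * g p.2) =ᵐ[volume] 0 := by
    rw [Measure.volume_eq_prod]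
    rcases mul_eq_zero.1 h with h | h
    · filter_upwards [Measure.quasiMeasurePreserving_fst.ae_eq_comp
        ((eLpNorm_eq_zero_iff hf two_ne_zero).1 h)] with p hp
      simp_all
    · filter_upwards [Measure.quasiMeasurePreserving_snd.ae_eq_comp
        ((eLpNorm_eq_zero_iff hg two_ne_zero).1 h)] with p hp
      simp_all
  have hR : ∀ R : Set (ℝ × ℝ), ∫⁻ p in R, (‖f p.1 * g p.2‖₊ : ℝ≥0∞) = 0 := fun R =>
    lintegral_eq_zero_of_ae_eq_zero (ae_restrict_of_ae (hfg.mono fun p hp => by simp [hp]))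
  simp only [lacMax, avgOn, hR, ENNReal.zero_div]
  simp

/-- Theorem 2 of the paper: the bilinear lacunary maximal operator maps
`L²(ℝ) × L²(ℝ)` to `L^{1,∞}(ℝ)`. -/
theorem bilinear_lacunary_weak_type :
    ∃ C : ℝ, 0 < C ∧
      ∀ f g : SchwartzMap ℝ ℂ, ∀ lam : ℝ, 0 < lam →
        volume {x : ℝ | ENNReal.ofReal lam < lacMax (⇑f) (⇑g) x} ≤
          ENNReal.ofReal (C / lam) *
            (eLpNorm (⇑f) 2 volume * eLpNorm (⇑g) 2 volume) := by
  refine ⟨288, by norm_num, fun f g lam hlam => ?_⟩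
  have hf := f.continuous.aestronglyMeasurable (μ := volume)
  have hg := g.continuous.aestronglyMeasurable (μ := volume)
  by_cases hfg : eLpNorm f 2 volume * eLpNorm g 2 volume = 0
  · simp [lacMax_eq_zero_of_eLpNorm_mul_eq_zero hf hg hfg]
  obtain ⟨hf₀, hg₀⟩ := mul_ne_zero_iff.1 hfg
  have hf_top := (f.memLp 2).eLpNorm_ne_top
  have hg_top := (g.memLp 2).eLpNorm_ne_top
  calc volume {x : ℝ | ENNReal.ofReal lam < lacMax f g x}
      ≤ ENNReal.ofReal (144 / lam) * (eLpNorm g 2 volume / eLpNorm f 2 volume *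
          eLpNorm f 2 volume ^ 2 + (eLpNorm g 2 volume / eLpNorm f 2 volume)⁻¹ *
          eLpNorm g 2 volume ^ 2) :=
        volume_setOf_lt_lacMax_le hf.aemeasurable hg.aemeasurable
          (ENNReal.div_pos hg₀ hf_top).ne' (ENNReal.div_ne_top hg_top hf₀) hlam
    _ = ENNReal.ofReal (288 / lam) * (eLpNorm f 2 volume * eLpNorm g 2 volume) := by
        rw [ENNReal.div_mul_sq_add_inv_div_mul_sq hf₀ hf_top hg₀ hg_top, ← mul_assoc,
          ← ENNReal.ofReal_ofNat 2, ← ENNReal.ofReal_mul (by positivity)]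
        ring_nf
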